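/- arXiv:1910.06963 — 4 statements merged into one kernel-verified Lean document; each statement's English description precedes it below -/
import Mathlib

section
/- Let n ≥ 2 be an integer and let M := ⌊n/2⌋·⌊(n−1)/2⌋. For all integers u, v with 1 ≤ u, v ≤ n, one has f_n(u,v) ≥ M, and f_n(u,v) = M if and only if |u−v| ∈ {⌊n/2⌋, ⌈n/2⌉}. Moreover, if |u−v| ∉ {⌊n/2⌋, ⌈n/2⌉}, then f_n(u,v) ≥ M + 1 when n is even, and f_n(u,v) ≥ M + 2 when n is odd. -/
/-- `C2 x` is the binomial-type expression `x(x-1)/2`. -/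
def C2 (x : ℤ) : ℤ := x * (x - 1) / 2

/-- `dmod n u v` is the unique integer in `{0,…,n-1}` congruent to `v - u` mod `n`. -/
def dmod (n u v : ℤ) : ℤ := (v - u) % n

/-- `fmod n u v = C(d_n(u,v),2) + C(n - d_n(u,v),2)`. -/
def fmod (n u v : ℤ) : ℤ := C2 (dmod n u v) + C2 (n - dmod n u v)

lemma two_C2 (x : ℤ) : 2 * C2 x = x * (x - 1) := by
  obtain ⟨k, hk⟩ := Int.even_mul_succ_self (x - 1)
  have hx : x * (x - 1) = 2 * k := by linear_combination hk
  rw [C2, hx, Int.mul_ediv_cancel_left _ two_ne_zero]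

theorem stmt_0 (n : ℤ) (hn : 2 ≤ n) (M : ℤ) (hM : M = (n / 2) * ((n - 1) / 2))
    (u v : ℤ) (hu1 : 1 ≤ u) (hun : u ≤ n) (hv1 : 1 ≤ v) (hvn : v ≤ n) :
    M ≤ fmod n u v ∧
    (fmod n u v = M ↔ (|u - v| = n / 2 ∨ |u - v| = (n + 1) / 2)) ∧
    (¬(|u - v| = n / 2 ∨ |u - v| = (n + 1) / 2) →
      (Even n → M + 1 ≤ fmod n u v) ∧ (Odd n → M + 2 ≤ fmod n u v)) := by
  set d := dmod n u v with hd
  have ha : |u - v| = u - v ∨ |u - v| = -(u - v) := abs_choice _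
  have ha0 : 0 ≤ |u - v| := abs_nonneg _
  have hcase : d = |u - v| ∨ d = n - |u - v| := by
    rcases lt_or_ge v u with h | h
    · right
      have h1 : (v - u) % n = (v - u + n * 1) % n := by
        rw [Int.add_mul_emod_self_left]
      have h2 : (v - u + n * 1) % n = v - u + n * 1 :=
        Int.emod_eq_of_lt (by omega) (by omega)
      have h3 : d = v - u + n * 1 := by rw [hd, dmod, h1, h2]
      omega
    · left
      have h3 : d = v - u := by
        rw [hd, dmod]; exact Int.emod_eq_of_lt (by omega) (by omega)
      omega
  have hF : 2 * fmod n u v = d * (d - 1) + (n - d) * (n - d - 1) := by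
    rw [fmod, mul_add, two_C2, two_C2, ← hd]
  rcases Int.even_or_odd n with ⟨m, hm⟩ | ⟨m, hm⟩
  · -- n = m + m
    have hn2 : n / 2 = m := by omega
    have hn32 : (n + 1) / 2 = m := by omega
    have hM' : M = m * (m - 1) := by rw [hM, hn2]; congr 1; omega
    rw [hn2, hn32]
    have h2key : 2 * (fmod n u v - M) = 2 * (d - m) ^ 2 := by
      linear_combination hF - 2 * hM' + (n + 2 * m - 2 * d - 1) * hm
    have hkey : fmod n u v - M = (d - m) ^ 2 := by linarith
    refine ⟨by nlinarith [sq_nonneg (d - m)], ⟨fun h => ?_, fun h => ?_⟩, fun h => ?_⟩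
    · have h0 : (d - m) ^ 2 = 0 := by linarith
      have hdm : d = m := by have := pow_eq_zero_iff (n := 2) (by norm_num) |>.mp h0; omega
      omega
    · have hdm : d = m := by omega
      have h0 : (d - m) ^ 2 = 0 := by rw [hdm]; ring
      linarith
    · have hdm : d ≠ m := by omega
      have h1 : 1 ≤ (d - m) ^ 2 := by
        rcases lt_or_gt_of_ne hdm with h' | h' <;> nlinarith
      constructor
      · intro _; linarith
      · rintro ⟨k, hk⟩; omega
  · -- n = 2 * m + 1
    have hn2 : n / 2 = m := by omega
    have hn32 : (n + 1) / 2 = m + 1 := by omega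
    have hM' : M = m * m := by rw [hM, hn2]; congr 1; omega
    rw [hn2, hn32]
    have h2key : 2 * (fmod n u v - M) = 2 * ((d - m) * (d - m - 1)) := by
      linear_combination hF - 2 * hM' + (n + 2 * m - 2 * d) * hm
    have hkey : fmod n u v - M = (d - m) * (d - m - 1) := by linarith
    have hnonneg : 0 ≤ (d - m) * (d - m - 1) := by
      rcases le_or_gt d m with h' | h'
      · have := mul_nonneg (show (0:ℤ) ≤ m - d by omega) (show (0:ℤ) ≤ m + 1 - d by omega)
        nlinarith
      · have := mul_nonneg (show (0:ℤ) ≤ d - m by omega) (show (0:ℤ) ≤ d - m - 1 by omega)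
        linarith
    refine ⟨by linarith, ⟨fun h => ?_, fun h => ?_⟩, fun h => ?_⟩
    · have h0 : (d - m) * (d - m - 1) = 0 := by linarith
      have := mul_eq_zero.mp h0
      omega
    · have hdm : d = m ∨ d = m + 1 := by omega
      have h0 : (d - m) * (d - m - 1) = 0 := by
        rcases hdm with h' | h' <;> rw [h'] <;> ring
      linarith
    · have hdm : d ≠ m ∧ d ≠ m + 1 := by omega
      have h2 : 2 ≤ (d - m) * (d - m - 1) := by
        rcases le_or_gt d m with h' | h'
        · have h5 : d ≤ m - 1 := by omega
          have h4 := mul_nonneg (show (0:ℤ) ≤ m - d - 1 by omega) (show (0:ℤ) ≤ m + 1 - d by omega)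
          nlinarith
        · have h5 : m + 2 ≤ d := by omega
          have h4 := mul_nonneg (show (0:ℤ) ≤ d - m - 2 by omega) (show (0:ℤ) ≤ d - m - 1 by omega)
          nlinarith
      constructor
      · rintro ⟨k, hk⟩; omega
      · intro _; linarith
end

section
/- Let c ≥ 2 be an integer, let A and B be nonempty finite sets, and let u : A → ZMod c and v : B → ZMod c be functions such that min(d(u(i), v(j)), d(v(j), u(i))) = ⌊c/2⌋ for every i ∈ A and j ∈ B. Then: (i) there exist p, q ∈ ZMod c such that u(i) ∈ {p, p+1} for all i ∈ A and v(j) ∈ {q, q+1} for all j ∈ B; (ii) either u is constant on A or v is constant on B; and if c is even then both u and v are constant. -/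
/-!
The hypothesis says `v j - u i = ±⌊c/2⌋`, and `-⌊c/2⌋ = ⌊c/2⌋ + (c mod 2)` in `ZMod c`, so
`v j - (u i + ⌊c/2⌋) ∈ {0, c mod 2}` for all `i, j`. For even `c` this forces every `v j` to equal
every `u i + ⌊c/2⌋`. For odd `c ≥ 3` the set `{w, w + 1}` determines `w` because `2 ≠ 0`, so two
distinct values of `v` determine `u i + ⌊c/2⌋`, hence `u i`, independently of `i`.
-/

/-- `dz x y` is the least nonnegative residue of `y - x` modulo `c`. -/
def dz {c : ℕ} (x y : ZMod c) : ℕ := (y - x).val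

section ShiftedPairs

variable {G ι κ : Type*} [AddCommGroup G] {u : ι → G} {v : κ → G} {a e : G}

theorem eq_of_distinct_mem_pair_add {x y w w' : G} (he : e + e ≠ 0) (hxy : x ≠ y)
    (hx : x = w ∨ x = w + e) (hy : y = w ∨ y = w + e)
    (hx' : x = w' ∨ x = w' + e) (hy' : y = w' ∨ y = w' + e) : w = w' := by
  grind

theorem exists_forall_eq_or_eq_add_of_left (h : ∀ i j, v j = u i + a ∨ v j = u i + a + e)
    (j₀ : κ) : ∃ p, ∀ i, u i = p ∨ u i = p + e :=
  ⟨v j₀ - a - e, fun i => (h i j₀).symm.imp (fun hj => by rw [hj]; abel) fun hj => by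
    rw [hj]; abel⟩

theorem forall_eq_and_forall_eq_of_forall_eq_add (h : ∀ i j, v j = u i + a)
    (i₀ : ι) (j₀ : κ) : (∀ i i', u i = u i') ∧ ∀ j j', v j = v j' := by
  have hu : ∀ i, u i = v j₀ - a := fun i => by rw [h i j₀]; abel
  exact ⟨fun i i' => by rw [hu, hu], fun j j' => by rw [h i₀, h i₀]⟩

theorem forall_eq_or_forall_eq_of_add_self_ne_zero (he : e + e ≠ 0)
    (h : ∀ i j, v j = u i + a ∨ v j = u i + a + e) :
    (∀ i i', u i = u i') ∨ ∀ j j', v j = v j' := by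
  by_contra! hne
  obtain ⟨⟨i, i', hi⟩, j, j', hj⟩ := hne
  exact hi <| add_right_cancel <|
    eq_of_distinct_mem_pair_add he hj (h i j) (h i j') (h i' j) (h i' j')

end ShiftedPairs

namespace ZMod

theorem eq_or_eq_neg_of_min_val_val_neg_eq_half {c : ℕ} [NeZero c] {z : ZMod c}
    (h : min z.val (-z).val = c / 2) : z = (c / 2 : ℕ) ∨ z = -(c / 2 : ℕ) := by
  rw [neg_val] at h
  split_ifs at h with hz
  · left
    rw [hz, ← h, hz, val_zero, min_self, Nat.cast_zero]
  · have hlt := z.val_lt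
    rcases (by omega : z.val = c / 2 ∨ z.val = c - c / 2) with hval | hval
    · left
      rw [← natCast_zmod_val z, hval]
    · right
      rw [← natCast_zmod_val z, hval, Nat.cast_sub (Nat.div_le_self c 2), natCast_self, zero_sub]

theorem neg_half_eq_half_add_mod_two (c : ℕ) :
    -((c / 2 : ℕ) : ZMod c) = (c / 2 : ℕ) + (c % 2 : ℕ) := by
  have h := congrArg (fun n : ℕ => (n : ZMod c)) (Nat.div_add_mod c 2)
  simp only [Nat.cast_add, Nat.cast_mul, natCast_self] at h
  rw [neg_eq_iff_add_eq_zero, ← h]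
  ring

end ZMod

theorem eq_add_half_or_eq_add_half_add_mod_two_of_min_dz_eq {c : ℕ} [NeZero c] {x y : ZMod c}
    (h : min (dz x y) (dz y x) = c / 2) :
    y = x + (c / 2 : ℕ) ∨ y = x + (c / 2 : ℕ) + (c % 2 : ℕ) := by
  rw [dz, dz, ← neg_sub y x] at h
  rw [add_assoc, ← ZMod.neg_half_eq_half_add_mod_two]
  exact (ZMod.eq_or_eq_neg_of_min_val_val_neg_eq_half h).imp
    (fun hz => by rw [← hz]; abel) fun hz => by rw [← hz]; abel

theorem stmt_3_general (c : ℕ) (hc : 2 ≤ c) (A B : Type)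
    [Nonempty A] [Nonempty B] (u : A → ZMod c) (v : B → ZMod c)
    (h : ∀ (i : A) (j : B), min (dz (u i) (v j)) (dz (v j) (u i)) = c / 2) :
    ((∃ p : ZMod c, ∀ i : A, u i = p ∨ u i = p + 1) ∧
     (∃ q : ZMod c, ∀ j : B, v j = q ∨ v j = q + 1)) ∧
    ((∀ i i' : A, u i = u i') ∨ (∀ j j' : B, v j = v j')) ∧
    (Even c → (∀ i i' : A, u i = u i') ∧ (∀ j j' : B, v j = v j')) := by
  have : NeZero c := ⟨by omega⟩
  obtain ⟨i₀⟩ := ‹Nonempty A›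
  obtain ⟨j₀⟩ := ‹Nonempty B›
  have key := fun i j => eq_add_half_or_eq_add_half_add_mod_two_of_min_dz_eq (h i j)
  rcases Nat.even_or_odd c with heven | hodd
  · simp only [Nat.even_iff.mp heven, Nat.cast_zero, add_zero, or_self] at key
    obtain ⟨hu, hv⟩ := forall_eq_and_forall_eq_of_forall_eq_add key i₀ j₀
    exact ⟨⟨⟨u i₀, fun i => .inl (hu i i₀)⟩, v j₀, fun j => .inl (hv j j₀)⟩, .inl hu,
      fun _ => ⟨hu, hv⟩⟩
  · have hmod := Nat.odd_iff.mp hodd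
    rw [hmod, Nat.cast_one] at key
    have htwo : (1 + 1 : ZMod c) ≠ 0 := by
      rw [one_add_one_eq_two, ← Nat.cast_ofNat, Ne, ZMod.natCast_eq_zero_iff]
      exact fun hdvd => by have := Nat.le_of_dvd two_pos hdvd; omega
    exact ⟨⟨exists_forall_eq_or_eq_add_of_left key j₀, _, key i₀⟩,
      forall_eq_or_forall_eq_of_add_self_ne_zero htwo key,
      fun heven => absurd heven (Nat.not_even_iff_odd.mpr hodd)⟩

theorem stmt_3 (c : ℕ) (hc : 2 ≤ c) (A B : Type) [Fintype A] [Fintype B]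
    [Nonempty A] [Nonempty B] (u : A → ZMod c) (v : B → ZMod c)
    (h : ∀ (i : A) (j : B), min (dz (u i) (v j)) (dz (v j) (u i)) = c / 2) :
    ((∃ p : ZMod c, ∀ i : A, u i = p ∨ u i = p + 1) ∧
     (∃ q : ZMod c, ∀ j : B, v j = q ∨ v j = q + 1)) ∧
    ((∀ i i' : A, u i = u i') ∨ (∀ j j' : B, v j = v j')) ∧
    (Even c → (∀ i i' : A, u i = u i') ∧ (∀ j j' : B, v j = v j')) :=
  stmt_3_general c hc A B u v h
end

section
/- For every integer n ≥ 8, 4·(C(n−4,4) + 6·⌊(n−4)/2⌋·⌊(n−5)/2⌋ + 2(n−4) − 3) ≥ ⌊n/2⌋·⌊(n−1)/2⌋·⌊(n−2)/2⌋·⌊(n−3)/2⌋, with equality if and only if 8 ≤ n ≤ 11. (The left side is four times the number of crossings of the drawing of K_n obtained from a crossing-minimal tripartite-circle drawing of K_{2,2,n−4} by adding straight-line edges inside the circles; the right side is 4·H(n), where H(n) is the Harary–Hill bound.) -/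
/-!
Writing `n = 2k + 8` or `n = 2k + 9`, both sides are polynomials in `k`, and three times their
difference factors as `k (k - 1) (5k² + 9k - 8)`, resp. `(k + 1) k (k - 1) (5k + 14)`.
These vanish exactly for `k ∈ {0, 1}`, i.e. `8 ≤ n ≤ 11`, and are positive for `k ≥ 2`.
-/

def fourHararyHill (n : ℕ) : ℕ := n / 2 * ((n - 1) / 2) * ((n - 2) / 2) * ((n - 3) / 2)

def tripartiteCrossings (n : ℕ) : ℤ :=
  ((n - 4).choose 4 : ℤ) + 6 * (((n - 4) / 2 : ℕ) : ℤ) * (((n - 5) / 2 : ℕ) : ℤ)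
    + 2 * ((n : ℤ) - 4) - 3

lemma choose_four_mul_twentyFour (a : ℕ) :
    24 * (((a + 4).choose 4 : ℕ) : ℤ) = ((a : ℤ) + 4) * (a + 3) * (a + 2) * (a + 1) := by
  have h := Nat.descFactorial_eq_factorial_mul_choose (a + 4) 4
  simp only [Nat.descFactorial_succ, Nat.descFactorial_zero, Nat.factorial] at h
  have h' := congrArg (fun x : ℕ => (x : ℤ)) h
  push_cast at h'
  linear_combination -h'

lemma tripartiteCrossings_sub_fourHararyHill_even (k : ℕ) :
    3 * (4 * tripartiteCrossings (2 * k + 8) - fourHararyHill (2 * k + 8)) =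
      (k : ℤ) * (k - 1) * (5 * k ^ 2 + 9 * k - 8) := by
  have hc := choose_four_mul_twentyFour (2 * k)
  simp only [tripartiteCrossings, fourHararyHill,
    show 2 * k + 8 - 4 = 2 * k + 4 by omega, show (2 * k + 8) / 2 = k + 4 by omega,
    show (2 * k + 8 - 1) / 2 = k + 3 by omega, show (2 * k + 8 - 2) / 2 = k + 3 by omega,
    show (2 * k + 8 - 3) / 2 = k + 2 by omega, show (2 * k + 4) / 2 = k + 2 by omega,
    show (2 * k + 8 - 5) / 2 = k + 1 by omega]
  push_cast at hc ⊢
  linarith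

lemma tripartiteCrossings_sub_fourHararyHill_odd (k : ℕ) :
    3 * (4 * tripartiteCrossings (2 * k + 9) - fourHararyHill (2 * k + 9)) =
      ((k : ℤ) + 1) * k * (k - 1) * (5 * k + 14) := by
  have hc := choose_four_mul_twentyFour (2 * k + 1)
  simp only [tripartiteCrossings, fourHararyHill,
    show 2 * k + 9 - 4 = 2 * k + 1 + 4 by omega, show (2 * k + 9) / 2 = k + 4 by omega,
    show (2 * k + 9 - 1) / 2 = k + 4 by omega, show (2 * k + 9 - 2) / 2 = k + 3 by omega,
    show (2 * k + 9 - 3) / 2 = k + 3 by omega, show (2 * k + 1 + 4) / 2 = k + 2 by omega,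
    show (2 * k + 9 - 5) / 2 = k + 2 by omega]
  push_cast at hc ⊢
  linarith

lemma fourHararyHill_eq_of_le_eleven {n : ℕ} (h8 : 8 ≤ n) (h11 : n ≤ 11) :
    (fourHararyHill n : ℤ) = 4 * tripartiteCrossings n := by
  interval_cases n <;> decide

lemma fourHararyHill_lt_of_twelve_le {n : ℕ} (hn : 12 ≤ n) :
    (fourHararyHill n : ℤ) < 4 * tripartiteCrossings n := by
  obtain ⟨k, rfl | rfl⟩ : ∃ k, n = 2 * k + 8 ∨ n = 2 * k + 9 := ⟨(n - 8) / 2, by omega⟩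
  · have hk : (2 : ℤ) ≤ k := by exact_mod_cast (show 2 ≤ k by omega)
    have hpos : 0 < (k : ℤ) * (k - 1) * (5 * k ^ 2 + 9 * k - 8) := by
      apply mul_pos (mul_pos _ _) <;> nlinarith
    linarith [tripartiteCrossings_sub_fourHararyHill_even k]
  · have hk : (2 : ℤ) ≤ k := by exact_mod_cast (show 2 ≤ k by omega)
    have hpos : 0 < ((k : ℤ) + 1) * k * (k - 1) * (5 * k + 14) := by
      apply mul_pos (mul_pos (mul_pos _ _) _) <;> linarith
    linarith [tripartiteCrossings_sub_fourHararyHill_odd k]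

theorem stmt_16 (n : ℕ) (hn : 8 ≤ n) :
    (((n / 2 * ((n - 1) / 2) * ((n - 2) / 2) * ((n - 3) / 2) : ℕ)) : ℤ) ≤
      4 * (((n - 4).choose 4 : ℤ)
        + 6 * (((n - 4) / 2 : ℕ) : ℤ) * (((n - 5) / 2 : ℕ) : ℤ)
        + 2 * ((n : ℤ) - 4) - 3) ∧
    (4 * (((n - 4).choose 4 : ℤ)
        + 6 * (((n - 4) / 2 : ℕ) : ℤ) * (((n - 5) / 2 : ℕ) : ℤ)
        + 2 * ((n : ℤ) - 4) - 3) =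
      (((n / 2 * ((n - 1) / 2) * ((n - 2) / 2) * ((n - 3) / 2) : ℕ)) : ℤ) ↔ n ≤ 11) := by
  change (fourHararyHill n : ℤ) ≤ 4 * tripartiteCrossings n ∧
    (4 * tripartiteCrossings n = fourHararyHill n ↔ n ≤ 11)
  rcases le_or_gt n 11 with h11 | h12
  · have heq := fourHararyHill_eq_of_le_eleven hn h11
    exact ⟨heq.le, iff_of_true heq.symm h11⟩
  · have hlt := fourHararyHill_lt_of_twelve_le h12
    exact ⟨hlt.le, iff_of_false hlt.ne' (by omega)⟩
end

section
/- Let m and n be positive integers with m dividing n, and set k := n/m. Then C(n,2)·C(m,2) + Σ_{1≤i<j≤m} (k·(j−i))² − n·Σ_{1≤i<j≤m} k·(j−i) = n·(m−1)·(2mn − 3m − n)/12. (This is the simplification of the bipartite cylindrical crossing number formula for K_{n,m} in the case m | n, using that ⌊(n/m)(j−1)⌋ − ⌊(n/m)(i−1)⌋ = k(j−i) when m divides n.) -/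
/-! With `n = k m`, pulling `k` out of both double sums reduces the claim to the closed forms
`∑_{i<j} (j - i) = m (m² - 1) / 6` and `∑_{i<j} (j - i)² = m² (m² - 1) / 12`, both proved by
induction on `m`; what remains is a polynomial identity in `k` and `m`. -/

open Finset

section PairSums

variable {K : Type*} [Field K] [CharZero K]

lemma sum_Icc_sum_Ioc_succ_top {M : Type*} [AddCommMonoid M] (m : ℕ) (f : ℕ → ℕ → M) :
    ∑ i ∈ Icc 1 (m + 1), ∑ j ∈ Ioc i (m + 1), f i j
      = ∑ i ∈ Icc 1 m, ∑ j ∈ Ioc i m, f i j + ∑ i ∈ Icc 1 m, f i (m + 1) := by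
  rw [sum_Icc_succ_top (by omega), Ioc_self, sum_empty, add_zero, ← sum_add_distrib]
  refine sum_congr rfl fun i hi => ?_
  rw [sum_Ioc_succ_top (by rw [mem_Icc] at hi; omega)]

lemma sum_Icc_one_cast (m : ℕ) : ∑ i ∈ Icc 1 m, (i : K) = m * (m + 1) / 2 := by
  induction m with
  | zero => simp
  | succ m ih =>
    rw [sum_Icc_succ_top (by omega), ih]
    push_cast
    ring

lemma sum_Icc_one_cast_sq (m : ℕ) :
    ∑ i ∈ Icc 1 m, (i : K) ^ 2 = m * (m + 1) * (2 * m + 1) / 6 := by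
  induction m with
  | zero => simp
  | succ m ih =>
    rw [sum_Icc_succ_top (by omega), ih]
    push_cast
    ring

lemma sum_Icc_sum_Ioc_sub (m : ℕ) :
    ∑ i ∈ Icc 1 m, ∑ j ∈ Ioc i m, ((j : K) - i) = m * (m ^ 2 - 1) / 6 := by
  induction m with
  | zero => simp
  | succ m ih =>
    rw [sum_Icc_sum_Ioc_succ_top, ih, sum_sub_distrib, sum_Icc_one_cast, sum_const,
      Nat.card_Icc, nsmul_eq_mul]
    push_cast
    ring

lemma sum_Icc_sum_Ioc_sub_sq (m : ℕ) :
    ∑ i ∈ Icc 1 m, ∑ j ∈ Ioc i m, ((j : K) - i) ^ 2 = m ^ 2 * (m ^ 2 - 1) / 12 := by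
  induction m with
  | zero => simp
  | succ m ih =>
    have expand : ∀ i ∈ Icc 1 m, (((m + 1 : ℕ) : K) - i) ^ 2
        = ((m + 1 : ℕ) : K) ^ 2 - 2 * (m + 1 : ℕ) * i + (i : K) ^ 2 := fun _ _ => by ring
    rw [sum_Icc_sum_Ioc_succ_top, ih, sum_congr rfl expand, sum_add_distrib, sum_sub_distrib,
      ← mul_sum, sum_Icc_one_cast, sum_Icc_one_cast_sq, sum_const, Nat.card_Icc, nsmul_eq_mul]
    push_cast
    ring

end PairSums

theorem stmt_19_general (m n : ℕ) (hdvd : m ∣ n)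
    (k : ℕ) (hk : k = n / m) :
    ((n.choose 2 : ℚ)) * (m.choose 2)
      + (∑ i ∈ Finset.Icc 1 m, ∑ j ∈ Finset.Ioc i m, ((k : ℚ) * ((j : ℚ) - i)) ^ 2)
      - (n : ℚ) * (∑ i ∈ Finset.Icc 1 m, ∑ j ∈ Finset.Ioc i m, (k : ℚ) * ((j : ℚ) - i)) =
    (n : ℚ) * ((m : ℚ) - 1) * (2 * m * n - 3 * m - n) / 12 := by
  obtain rfl : n = m * k := hk ▸ (Nat.mul_div_cancel' hdvd).symm
  simp_rw [mul_pow, ← mul_sum]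
  rw [sum_Icc_sum_Ioc_sub, sum_Icc_sum_Ioc_sub_sq, Nat.cast_choose_two, Nat.cast_choose_two]
  push_cast
  ring

theorem stmt_19 (m n : ℕ) (hm : 0 < m) (hn : 0 < n) (hdvd : m ∣ n)
    (k : ℕ) (hk : k = n / m) :
    ((n.choose 2 : ℚ)) * (m.choose 2)
      + (∑ i ∈ Finset.Icc 1 m, ∑ j ∈ Finset.Ioc i m, ((k : ℚ) * ((j : ℚ) - i)) ^ 2)
      - (n : ℚ) * (∑ i ∈ Finset.Icc 1 m, ∑ j ∈ Finset.Ioc i m, (k : ℚ) * ((j : ℚ) - i)) =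
    (n : ℚ) * ((m : ℚ) - 1) * (2 * m * n - 3 * m - n) / 12 :=
  stmt_19_general m n hdvd k hk
end
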